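/- arXiv:1511.00743 — 2 statements merged into one kernel-verified Lean document; each statement's English description precedes it below -/
import Mathlib

section
/- Let d > 0, γ > 0, μ > 0 and a ∈ ℝ² with ln(1+μ) > γ + |a|²/(4d), and set L*(a) := π·√(2d)/√(ln(1+μ) − γ − |a|²/(4d)). Let Ω = (0,L) × (0,L) ⊂ ℝ² with 0 < L < L*(a). Then every solution of the impulsive reaction–diffusion system on Ω with f(u) = −γ·u and g(N) = (1+μ)·N/(1+μ·N) satisfies lim_{m→∞} N_m(x) = 0 for every x ∈ Ω. -/
/-!
Comparison with an explicit decaying mode. Pick `L < ℓ < L*(a)` and take the principal Dirichlet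
mode of the larger square `(-s, ℓ - s)²`, `s = (ℓ - L) / 2`: with `κ = a / (2d)`, the function
`φ(x) = ∏ⱼ e^{κⱼ xⱼ} sin (π (xⱼ + s) / ℓ)` is positive on `[0, L]²` and satisfies
`d Δφ - a ⬝ ∇φ = -(|a|² / (4d) + 2dπ² / ℓ²) φ`, so `A e^{β t} φ` with
`β = -γ - |a|² / (4d) - 2dπ² / ℓ²` solves the linear equation. Since `g(N) ≤ (1 + μ) N`, the
parabolic comparison principle gives `N_m ≤ C rᵐ φ` with `r = (1 + μ) e^β`, and `r < 1`
is exactly the condition `ℓ < L*(a)`.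
-/

open Real Filter MeasureTheory
open scoped Topology ENNReal

noncomputable section

/-- First-order partial derivative of `u` in the `i`-th coordinate direction. -/
def pd {n : ℕ} (u : EuclideanSpace ℝ (Fin n) → ℝ) (i : Fin n)
    (x : EuclideanSpace ℝ (Fin n)) : ℝ :=
  fderiv ℝ u x (EuclideanSpace.single i 1)

/-- Second-order partial derivative `∂ᵢ∂ⱼ u`. -/
def pd2 {n : ℕ} (u : EuclideanSpace ℝ (Fin n) → ℝ) (i j : Fin n)
    (x : EuclideanSpace ℝ (Fin n)) : ℝ :=
  pd (fun y => pd u j y) i x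

/-- Laplacian of `u`. -/
def lap {n : ℕ} (u : EuclideanSpace ℝ (Fin n) → ℝ) (x : EuclideanSpace ℝ (Fin n)) : ℝ :=
  ∑ i, pd2 u i i x

/-- A solution of the impulsive reaction-diffusion system
`∂ₜ u⁽ᵐ⁾ = d Δu⁽ᵐ⁾ - a ⬝ ∇u⁽ᵐ⁾ + f (u⁽ᵐ⁾)` on `Ω × (0,1]` with hostile (Dirichlet) boundary
conditions, initial data `u⁽ᵐ⁾(·,0) = g (N_m ·)` and update rule `N_{m+1} = u⁽ᵐ⁾(·,1)`. -/
structure ImpSol (n : ℕ) (Ω : Set (EuclideanSpace ℝ (Fin n))) (d : ℝ)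
    (a : EuclideanSpace ℝ (Fin n) → EuclideanSpace ℝ (Fin n)) (f g : ℝ → ℝ) where
  N : ℕ → EuclideanSpace ℝ (Fin n) → ℝ
  u : ℕ → EuclideanSpace ℝ (Fin n) → ℝ → ℝ
  N_cont : ∀ m, ContinuousOn (N m) (closure Ω)
  N_nonneg : ∀ m, ∀ x ∈ closure Ω, 0 ≤ N m x
  N0_bdry : ∀ x ∈ frontier Ω, N 0 x = 0
  u_nonneg : ∀ m, ∀ x ∈ closure Ω, ∀ t ∈ Set.Icc (0:ℝ) 1, 0 ≤ u m x t
  u_cont : ∀ m, ContinuousOn (fun p : EuclideanSpace ℝ (Fin n) × ℝ => u m p.1 p.2)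
    (closure Ω ×ˢ Set.Icc (0:ℝ) 1)
  u_space_C2 : ∀ m, ∀ t ∈ Set.Ioc (0:ℝ) 1, ∀ x ∈ Ω, ContDiffAt ℝ 2 (fun y => u m y t) x
  u_time_C1 : ∀ m, ∀ x ∈ Ω, ∀ t ∈ Set.Ioc (0:ℝ) 1, ContDiffAt ℝ 1 (fun s => u m x s) t
  pde : ∀ m, ∀ x ∈ Ω, ∀ t ∈ Set.Ioc (0:ℝ) 1,
    deriv (fun s => u m x s) t =
      d * lap (fun y => u m y t) x - (∑ i, a x i * pd (fun y => u m y t) i x) + f (u m x t)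
  bdry : ∀ m, ∀ x ∈ frontier Ω, ∀ t ∈ Set.Ioc (0:ℝ) 1, u m x t = 0
  init : ∀ m, ∀ x ∈ Ω, u m x 0 = g (N m x)
  recur : ∀ m, ∀ x ∈ closure Ω, N (m + 1) x = u m x 1

lemma IsLocalMax.deriv_deriv_nonpos {f : ℝ → ℝ} {x₀ : ℝ} (h : IsLocalMax f x₀)
    (hc : ContinuousAt f x₀) : deriv (deriv f) x₀ ≤ 0 := by
  by_contra! hpos
  have hmin := isLocalMin_of_deriv_deriv_pos hpos h.deriv_eq_zero hc
  have hconst : f =ᶠ[𝓝 x₀] fun _ => f x₀ :=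
    (h.and hmin).mono fun y hy => le_antisymm hy.1 hy.2
  rw [hconst.deriv.deriv_eq, deriv_const', deriv_const] at hpos
  exact lt_irrefl 0 hpos

lemma HasDerivAt.nonneg_of_isMaxOn_Icc {f : ℝ → ℝ} {f' a b : ℝ} (hf : HasDerivAt f f' b)
    (hab : a < b) (hmax : IsMaxOn f (Set.Icc a b) b) : 0 ≤ f' := by
  have hcone : a - b ∈ posTangentConeAt (Set.Icc a b) b :=
    sub_mem_posTangentConeAt_of_segment_subset (segment_eq_Icc' b a ▸ by simp [hab.le])
  have h := hmax.localize.hasFDerivWithinAt_nonpos hf.hasFDerivAt.hasFDerivWithinAt hcone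
  simp only [ContinuousLinearMap.toSpanSingleton_apply, smul_eq_mul] at h
  nlinarith

section PartialDerivatives

variable {n : ℕ}

lemma pd_sub {f g : EuclideanSpace ℝ (Fin n) → ℝ} {x : EuclideanSpace ℝ (Fin n)}
    (hf : DifferentiableAt ℝ f x) (hg : DifferentiableAt ℝ g x) (i : Fin n) :
    pd (fun y => f y - g y) i x = pd f i x - pd g i x := by
  simp only [pd, fderiv_fun_sub hf hg, sub_apply]

lemma pd_const_mul {f : EuclideanSpace ℝ (Fin n) → ℝ} {x : EuclideanSpace ℝ (Fin n)}
    (hf : DifferentiableAt ℝ f x) (c : ℝ) (i : Fin n) :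
    pd (fun y => c * f y) i x = c * pd f i x := by
  simp only [pd, fderiv_const_mul hf, smul_apply, smul_eq_mul]

lemma differentiableAt_pd {f : EuclideanSpace ℝ (Fin n) → ℝ} {x : EuclideanSpace ℝ (Fin n)}
    (hf : ContDiffAt ℝ 2 f x) (i : Fin n) : DifferentiableAt ℝ (pd f i) x :=
  ((hf.fderiv_right (m := 1) (by norm_num)).differentiableAt one_ne_zero).clm_apply
    (differentiableAt_const _)

lemma pd2_sub {f g : EuclideanSpace ℝ (Fin n) → ℝ} {x : EuclideanSpace ℝ (Fin n)}
    (hf : ContDiffAt ℝ 2 f x) (hg : ContDiffAt ℝ 2 g x) (i : Fin n) :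
    pd2 (fun y => f y - g y) i i x = pd2 f i i x - pd2 g i i x := by
  have hpd : (fun y => pd (fun z => f z - g z) i y) =ᶠ[𝓝 x] fun y => pd f i y - pd g i y := by
    filter_upwards [hf.eventually (by simp), hg.eventually (by simp)] with y hfy hgy
    exact pd_sub (hfy.differentiableAt two_ne_zero) (hgy.differentiableAt two_ne_zero) i
  rw [pd2, pd, hpd.fderiv_eq, ← pd, pd_sub (differentiableAt_pd hf i) (differentiableAt_pd hg i)]
  rfl

lemma lap_sub {f g : EuclideanSpace ℝ (Fin n) → ℝ} {x : EuclideanSpace ℝ (Fin n)}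
    (hf : ContDiffAt ℝ 2 f x) (hg : ContDiffAt ℝ 2 g x) :
    lap (fun y => f y - g y) x = lap f x - lap g x := by
  simp only [lap, pd2_sub hf hg, Finset.sum_sub_distrib]

lemma lap_const_mul {f : EuclideanSpace ℝ (Fin n) → ℝ} (hf : ContDiff ℝ 2 f) (c : ℝ)
    (x : EuclideanSpace ℝ (Fin n)) : lap (fun y => c * f y) x = c * lap f x := by
  have hpd : ∀ i, (fun y => pd (fun z => c * f z) i y) = fun y => c * pd f i y := fun i =>
    funext fun y => pd_const_mul (hf.differentiable two_ne_zero y) c i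
  simp only [lap, pd2, hpd, pd_const_mul (differentiableAt_pd hf.contDiffAt _), Finset.mul_sum]

lemma hasDerivAt_comp_add_smul_single {f : EuclideanSpace ℝ (Fin n) → ℝ}
    {x : EuclideanSpace ℝ (Fin n)} {i : Fin n} {s : ℝ}
    (hf : DifferentiableAt ℝ f (x + s • EuclideanSpace.single i 1)) :
    HasDerivAt (fun t => f (x + t • EuclideanSpace.single i 1))
      (pd f i (x + s • EuclideanSpace.single i 1)) s := by
  have h := hf.hasFDerivAt.comp_hasDerivAt s (((hasDerivAt_id s).smul_const _).const_add x)
  rwa [one_smul] at h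

lemma IsLocalMax.pd_eq_zero {f : EuclideanSpace ℝ (Fin n) → ℝ} {x₀ : EuclideanSpace ℝ (Fin n)}
    (h : IsLocalMax f x₀) (i : Fin n) : pd f i x₀ = 0 := by
  simp [pd, h.fderiv_eq_zero]

lemma IsLocalMax.pd2_nonpos {f : EuclideanSpace ℝ (Fin n) → ℝ} {x₀ : EuclideanSpace ℝ (Fin n)}
    (h : IsLocalMax f x₀) (hf : ContDiffAt ℝ 2 f x₀) (i : Fin n) : pd2 f i i x₀ ≤ 0 := by
  set line : ℝ → EuclideanSpace ℝ (Fin n) := fun t => x₀ + t • EuclideanSpace.single i 1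
  have hlinec : ContinuousAt line 0 := by fun_prop
  have hline0 : line 0 = x₀ := by simp [line]
  have hline : Tendsto line (𝓝 0) (𝓝 x₀) := hline0 ▸ hlinec.tendsto
  have hderiv : deriv (fun t => f (line t)) =ᶠ[𝓝 0] fun t => pd f i (line t) := by
    filter_upwards [hline.eventually (hf.eventually (by simp))] with t ht
    exact (hasDerivAt_comp_add_smul_single (ht.differentiableAt two_ne_zero)).deriv
  have hpd2 : HasDerivAt (fun t => pd f i (line t)) (pd2 f i i x₀) 0 := by
    have h := hasDerivAt_comp_add_smul_single (i := i) (s := 0)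
      (by simpa using differentiableAt_pd hf i)
    rw [zero_smul, add_zero] at h
    exact h
  have hmax : IsLocalMax (fun t => f (line t)) 0 := by
    simpa [IsLocalMax, IsMaxFilter, line] using hline.eventually h
  have := hmax.deriv_deriv_nonpos ((hline0 ▸ hf.continuousAt).comp hlinec)
  rwa [hderiv.deriv_eq, hpd2.deriv] at this

lemma IsLocalMax.lap_nonpos {f : EuclideanSpace ℝ (Fin n) → ℝ} {x₀ : EuclideanSpace ℝ (Fin n)}
    (h : IsLocalMax f x₀) (hf : ContDiffAt ℝ 2 f x₀) : lap f x₀ ≤ 0 :=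
  Finset.sum_nonpos fun i _ => h.pd2_nonpos hf i

end PartialDerivatives

section Comparison

variable {n : ℕ}

def reactionDiffusionOp (d : ℝ) (a : EuclideanSpace ℝ (Fin n) → EuclideanSpace ℝ (Fin n))
    (f : ℝ → ℝ) (w : EuclideanSpace ℝ (Fin n) → ℝ) (x : EuclideanSpace ℝ (Fin n)) : ℝ :=
  d * lap w x - (∑ i, a x i * pd w i x) + f (w x)

lemma reactionDiffusionOp_le_of_isLocalMax {d : ℝ} (hd : 0 ≤ d)
    (a : EuclideanSpace ℝ (Fin n) → EuclideanSpace ℝ (Fin n)) {f : ℝ → ℝ} (hf : Antitone f)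
    {w₁ w₂ : EuclideanSpace ℝ (Fin n) → ℝ} {x₀ : EuclideanSpace ℝ (Fin n)}
    (h₁ : ContDiffAt ℝ 2 w₁ x₀) (h₂ : ContDiffAt ℝ 2 w₂ x₀)
    (hmax : IsLocalMax (fun y => w₁ y - w₂ y) x₀) (hle : w₂ x₀ ≤ w₁ x₀) :
    reactionDiffusionOp d a f w₁ x₀ ≤ reactionDiffusionOp d a f w₂ x₀ := by
  have hpd : ∀ i, pd w₁ i x₀ = pd w₂ i x₀ := fun i => by
    have h := hmax.pd_eq_zero i
    rwa [pd_sub (h₁.differentiableAt two_ne_zero) (h₂.differentiableAt two_ne_zero),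
      sub_eq_zero] at h
  have hlap : lap w₁ x₀ ≤ lap w₂ x₀ := by
    have h := hmax.lap_nonpos (h₁.sub h₂)
    rwa [lap_sub h₁ h₂, sub_nonpos] at h
  simp only [reactionDiffusionOp, hpd]
  gcongr
  exact hf hle

structure ParabolicRegular (Ω : Set (EuclideanSpace ℝ (Fin n)))
    (u : EuclideanSpace ℝ (Fin n) → ℝ → ℝ) : Prop where
  continuousOn : ContinuousOn (fun p : EuclideanSpace ℝ (Fin n) × ℝ => u p.1 p.2)
    (closure Ω ×ˢ Set.Icc 0 1)
  contDiffAt_space : ∀ t ∈ Set.Ioc (0 : ℝ) 1, ∀ x ∈ Ω, ContDiffAt ℝ 2 (fun y => u y t) x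
  differentiableAt_time : ∀ x ∈ Ω, ∀ t ∈ Set.Ioc (0 : ℝ) 1, DifferentiableAt ℝ (u x) t

theorem comparison_principle {Ω : Set (EuclideanSpace ℝ (Fin n))} (hΩo : IsOpen Ω)
    (hΩc : IsCompact (closure Ω)) {d : ℝ} (hd : 0 ≤ d)
    (a : EuclideanSpace ℝ (Fin n) → EuclideanSpace ℝ (Fin n)) {f : ℝ → ℝ} (hf : Antitone f)
    {u v : EuclideanSpace ℝ (Fin n) → ℝ → ℝ} (hu : ParabolicRegular Ω u)
    (hv : ParabolicRegular Ω v)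
    (hu_sub : ∀ x ∈ Ω, ∀ t ∈ Set.Ioc (0 : ℝ) 1,
      deriv (u x) t ≤ reactionDiffusionOp d a f (fun y => u y t) x)
    (hv_super : ∀ x ∈ Ω, ∀ t ∈ Set.Ioc (0 : ℝ) 1,
      reactionDiffusionOp d a f (fun y => v y t) x ≤ deriv (v x) t)
    (hinit : ∀ x ∈ Ω, u x 0 ≤ v x 0)
    (hbdry : ∀ x ∈ frontier Ω, ∀ t ∈ Set.Ioc (0 : ℝ) 1, u x t ≤ v x t) :
    ∀ x ∈ closure Ω, ∀ t ∈ Set.Icc (0 : ℝ) 1, u x t ≤ v x t := by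
  intro x hx t ht
  by_contra! hlt
  -- The penalty `ε t` makes the time derivative at the maximum strictly positive.
  set ε := (u x t - v x t) / 2 with hε
  have hε0 : 0 < ε := by linarith
  obtain ⟨⟨x₀, t₀⟩, ⟨hx₀, ht₀⟩, hmax⟩ := (hΩc.prod isCompact_Icc).exists_isMaxOn ⟨(x, t), hx, ht⟩
    ((hu.continuousOn.sub hv.continuousOn).sub (continuousOn_const.mul continuousOn_snd))
  have hW : ∀ y ∈ closure Ω, ∀ s ∈ Set.Icc (0 : ℝ) 1,
      u y s - v y s - ε * s ≤ u x₀ t₀ - v x₀ t₀ - ε * t₀ := fun y hy s hs =>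
    isMaxOn_iff.mp hmax (y, s) ⟨hy, hs⟩
  have hpos : ε * t₀ < u x₀ t₀ - v x₀ t₀ := by
    nlinarith [hW x hx t ht, ht.2]
  have ht₀pos : 0 < t₀ := by
    refine ht₀.1.lt_of_ne fun h => ?_
    subst h
    have hcont : ∀ w : EuclideanSpace ℝ (Fin n) → ℝ → ℝ, ParabolicRegular Ω w →
        ContinuousOn (fun y => w y 0) (closure Ω) := fun w hw =>
      hw.continuousOn.comp (continuous_id.prodMk continuous_const).continuousOn
        fun y hy => ⟨hy, by simp⟩
    linarith [le_on_closure hinit (hcont u hu) (hcont v hv) hx₀]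
  have ht₀' : t₀ ∈ Set.Ioc (0 : ℝ) 1 := ⟨ht₀pos, ht₀.2⟩
  have hx₀Ω : x₀ ∈ Ω := by
    by_contra hx₀Ω
    have := hbdry x₀ ⟨hx₀, by rwa [hΩo.interior_eq]⟩ t₀ ht₀'
    nlinarith
  have htime : ε ≤ deriv (u x₀) t₀ - deriv (v x₀) t₀ := by
    have hderiv := (((hu.differentiableAt_time x₀ hx₀Ω t₀ ht₀').hasDerivAt.sub
      (hv.differentiableAt_time x₀ hx₀Ω t₀ ht₀').hasDerivAt).sub
      ((hasDerivAt_id t₀).const_mul ε))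
    have := hderiv.nonneg_of_isMaxOn_Icc ht₀pos fun s hs => hW x₀ hx₀ s ⟨hs.1, hs.2.trans ht₀.2⟩
    simp only [mul_one] at this
    linarith
  have hspace := reactionDiffusionOp_le_of_isLocalMax hd a hf
    (hu.contDiffAt_space t₀ ht₀' x₀ hx₀Ω) (hv.contDiffAt_space t₀ ht₀' x₀ hx₀Ω)
    (Filter.eventually_of_mem (hΩo.mem_nhds hx₀Ω) fun y hy =>
      show u y t₀ - v y t₀ ≤ u x₀ t₀ - v x₀ t₀ by linarith [hW y (subset_closure hy) t₀ ht₀])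
    (by nlinarith)
  linarith [hu_sub x₀ hx₀Ω t₀ ht₀', hv_super x₀ hx₀Ω t₀ ht₀']

end Comparison

section SeparationOfVariables

variable {n : ℕ}

lemma reactionDiffusionOp_const_mul {φ : EuclideanSpace ℝ (Fin n) → ℝ} (hφ : ContDiff ℝ 2 φ)
    (d : ℝ) (a : EuclideanSpace ℝ (Fin n) → EuclideanSpace ℝ (Fin n)) (c b : ℝ)
    (x : EuclideanSpace ℝ (Fin n)) :
    reactionDiffusionOp d a (fun u => c * u) (fun y => b * φ y) x
      = b * reactionDiffusionOp d a (fun u => c * u) φ x := by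
  have hsum : ∑ i, a x i * pd (fun y => b * φ y) i x = b * ∑ i, a x i * pd φ i x := by
    rw [Finset.mul_sum]
    exact Finset.sum_congr rfl fun i _ => by
      rw [pd_const_mul (hφ.differentiable two_ne_zero x)]; ring
  simp only [reactionDiffusionOp, lap_const_mul hφ, hsum]
  ring

theorem ParabolicRegular.of_exp_mul {φ : EuclideanSpace ℝ (Fin n) → ℝ} (hφ : ContDiff ℝ 2 φ)
    (Ω : Set (EuclideanSpace ℝ (Fin n))) (A β : ℝ) :
    ParabolicRegular Ω fun x t => A * exp (β * t) * φ x where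
  continuousOn := by
    have := hφ.continuous
    fun_prop
  contDiffAt_space _ _ _ _ := (contDiff_const.mul hφ).contDiffAt
  differentiableAt_time _ _ _ _ := by fun_prop

lemma deriv_exp_mul_eq_reactionDiffusionOp {φ : EuclideanSpace ℝ (Fin n) → ℝ}
    (hφ : ContDiff ℝ 2 φ) {d : ℝ} {a : EuclideanSpace ℝ (Fin n) → EuclideanSpace ℝ (Fin n)}
    {c β : ℝ} (heig : ∀ x, reactionDiffusionOp d a (fun u => c * u) φ x = β * φ x)
    (A : ℝ) (x : EuclideanSpace ℝ (Fin n)) (t : ℝ) :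
    deriv (fun s => A * exp (β * s) * φ x) t
      = reactionDiffusionOp d a (fun u => c * u) (fun y => A * exp (β * t) * φ y) x := by
  have hexp : HasDerivAt (fun s => A * exp (β * s) * φ x) (A * (exp (β * t) * β) * φ x) t :=
    ((((hasDerivAt_id t).const_mul β).exp).const_mul A).mul_const _ |>.congr_deriv (by simp)
  rw [hexp.deriv, reactionDiffusionOp_const_mul hφ, heig]
  ring

lemma prod_update_apply (ψ : Fin n → ℝ → ℝ) (i : Fin n) (g : ℝ → ℝ)
    (x : EuclideanSpace ℝ (Fin n)) :
    ∏ j, Function.update ψ i g j (x j) = g (x i) * ∏ j ∈ Finset.univ.erase i, ψ j (x j) := by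
  rw [← Finset.mul_prod_erase _ _ (Finset.mem_univ i), Function.update_self]
  congr 1
  exact Finset.prod_congr rfl fun j hj => by rw [Function.update_of_ne (Finset.ne_of_mem_erase hj)]

lemma pd_prod_apply {ψ : Fin n → ℝ → ℝ} (hψ : ∀ j, Differentiable ℝ (ψ j)) (i : Fin n)
    (x : EuclideanSpace ℝ (Fin n)) :
    pd (fun y => ∏ j, ψ j (y j)) i x = ∏ j, Function.update ψ i (deriv (ψ i)) j (x j) := by
  have h := HasFDerivAt.finsetProd (u := Finset.univ) (x := x)
    (g := fun j (y : EuclideanSpace ℝ (Fin n)) => ψ j (y j)) fun j _ =>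
      (hψ j (x j)).hasDerivAt.comp_hasFDerivAt x (EuclideanSpace.proj (𝕜 := ℝ) j).hasFDerivAt
  rw [pd, h.fderiv, prod_update_apply]
  simp [mul_comm]

lemma pd2_prod_apply {ψ : Fin n → ℝ → ℝ} (hψ : ∀ j, Differentiable ℝ (ψ j))
    (hψ' : ∀ j, Differentiable ℝ (deriv (ψ j))) (i : Fin n) (x : EuclideanSpace ℝ (Fin n)) :
    pd2 (fun y => ∏ j, ψ j (y j)) i i x
      = ∏ j, Function.update ψ i (deriv (deriv (ψ i))) j (x j) := by
  have hupd : ∀ j, Differentiable ℝ (Function.update ψ i (deriv (ψ i)) j) := fun j => by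
    rcases eq_or_ne j i with rfl | hj
    · simpa using hψ' j
    · simpa [Function.update_of_ne hj] using hψ j
  simp only [pd2, pd_prod_apply hψ, pd_prod_apply hupd, Function.update_idem,
    Function.update_self]

lemma reactionDiffusionOp_prod {ψ : Fin n → ℝ → ℝ} (hψ : ∀ j, Differentiable ℝ (ψ j))
    (hψ' : ∀ j, Differentiable ℝ (deriv (ψ j))) {d : ℝ} {a : EuclideanSpace ℝ (Fin n)}
    {ν : Fin n → ℝ}
    (hν : ∀ j z, d * deriv (deriv (ψ j)) z - a j * deriv (ψ j) z = -ν j * ψ j z)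
    (c : ℝ) (x : EuclideanSpace ℝ (Fin n)) :
    reactionDiffusionOp d (fun _ => a) (fun u => c * u) (fun y => ∏ j, ψ j (y j)) x
      = (c - ∑ j, ν j) * ∏ j, ψ j (x j) := by
  have hterm : ∀ i, d * pd2 (fun y => ∏ j, ψ j (y j)) i i x - a i * pd (fun y => ∏ j, ψ j (y j)) i x
      = -ν i * ∏ j, ψ j (x j) := fun i => by
    rw [pd2_prod_apply hψ hψ', pd_prod_apply hψ, prod_update_apply, prod_update_apply,
      ← Finset.mul_prod_erase _ _ (Finset.mem_univ i)]
    linear_combination (∏ j ∈ Finset.univ.erase i, ψ j (x j)) * hν i (x i)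
  have hsum := Finset.sum_congr rfl fun i (_ : i ∈ Finset.univ) => hterm i
  rw [Finset.sum_sub_distrib, ← Finset.sum_mul, Finset.sum_neg_distrib] at hsum
  simp only [reactionDiffusionOp, lap, Finset.mul_sum]
  linear_combination hsum

end SeparationOfVariables

section ExpSinProfile

/-- `z ↦ e^{κ z} sin (q (z + s))`: the first Dirichlet mode on `(-s, π/q - s)` of the
one-dimensional drift-diffusion operator with drift `2 d κ`. -/
def expSinProfile (κ q s z : ℝ) : ℝ := exp (κ * z) * sin (q * (z + s))

variable (κ q s : ℝ)

lemma hasDerivAt_exp_mul_sin_add (α β z : ℝ) :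
    HasDerivAt (fun z => exp (κ * z) * (α * sin (q * (z + s)) + β * cos (q * (z + s))))
      (exp (κ * z) * ((κ * α - q * β) * sin (q * (z + s)) + (κ * β + q * α) * cos (q * (z + s))))
      z := by
  have hlin : HasDerivAt (fun z => q * (z + s)) q z := by
    simpa using ((hasDerivAt_id z).add_const s).const_mul q
  have hexp : HasDerivAt (fun z => exp (κ * z)) (exp (κ * z) * κ) z := by
    simpa using ((hasDerivAt_id z).const_mul κ).exp
  exact (hexp.fun_mul ((hlin.sin.const_mul α).fun_add (hlin.cos.const_mul β))).congr_deriv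
    (by ring)

lemma deriv_expSinProfile :
    deriv (expSinProfile κ q s)
      = fun z => exp (κ * z) * (κ * sin (q * (z + s)) + q * cos (q * (z + s))) := by
  funext z
  have h := hasDerivAt_exp_mul_sin_add κ q s 1 0 z
  simp only [one_mul, zero_mul, add_zero, zero_add, mul_zero, sub_zero, mul_one] at h
  exact h.deriv

lemma deriv_deriv_expSinProfile :
    deriv (deriv (expSinProfile κ q s)) = fun z =>
      exp (κ * z) * ((κ ^ 2 - q ^ 2) * sin (q * (z + s)) + 2 * κ * q * cos (q * (z + s))) := by
  funext z
  rw [deriv_expSinProfile, (hasDerivAt_exp_mul_sin_add κ q s κ q z).deriv]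
  ring

lemma differentiable_expSinProfile : Differentiable ℝ (expSinProfile κ q s) := by
  unfold expSinProfile
  fun_prop

lemma differentiable_deriv_expSinProfile : Differentiable ℝ (deriv (expSinProfile κ q s)) := by
  rw [deriv_expSinProfile]
  fun_prop

lemma contDiff_expSinProfile : ContDiff ℝ 2 (expSinProfile κ q s) := by
  unfold expSinProfile
  fun_prop

lemma expSinProfile_ode (d z : ℝ) :
    d * deriv (deriv (expSinProfile κ q s)) z - 2 * d * κ * deriv (expSinProfile κ q s) z
      = -(d * (κ ^ 2 + q ^ 2)) * expSinProfile κ q s z := by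
  rw [deriv_deriv_expSinProfile, deriv_expSinProfile, expSinProfile]
  ring

lemma expSinProfile_pos {z : ℝ} (h₀ : 0 < q * (z + s)) (hπ : q * (z + s) < π) :
    0 < expSinProfile κ q s z :=
  mul_pos (exp_pos _) (sin_pos_of_pos_of_lt_pi h₀ hπ)

end ExpSinProfile

lemma IsCompact.exists_le_mul_of_pos {X : Type*} [TopologicalSpace X] {K : Set X}
    (hK : IsCompact K) {f g : X → ℝ} (hf : ContinuousOn f K) (hg : ContinuousOn g K)
    (hgpos : ∀ x ∈ K, 0 < g x) : ∃ C, 0 ≤ C ∧ ∀ x ∈ K, f x ≤ C * g x := by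
  obtain ⟨B, hB⟩ := hK.bddAbove_image (hf.div hg fun x hx => (hgpos x hx).ne')
  refine ⟨max B 0, le_max_right _ _, fun x hx => ?_⟩
  have hx' : f x / g x ≤ B := hB ⟨x, hx, rfl⟩
  rw [div_le_iff₀ (hgpos x hx)] at hx'
  nlinarith [le_max_left B 0, hgpos x hx]

namespace ImpSol

variable {n : ℕ} {Ω : Set (EuclideanSpace ℝ (Fin n))} {d : ℝ}
  {a : EuclideanSpace ℝ (Fin n) → EuclideanSpace ℝ (Fin n)}

theorem parabolicRegular {f g : ℝ → ℝ} (sol : ImpSol n Ω d a f g) (m : ℕ) :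
    ParabolicRegular Ω (sol.u m) where
  continuousOn := sol.u_cont m
  contDiffAt_space := sol.u_space_C2 m
  differentiableAt_time x hx t ht := (sol.u_time_C1 m x hx t ht).differentiableAt one_ne_zero

variable {c : ℝ} {g : ℝ → ℝ} {φ : EuclideanSpace ℝ (Fin n) → ℝ} {β k : ℝ}

theorem N_le_geometric (sol : ImpSol n Ω d a (fun u => c * u) g) (hΩo : IsOpen Ω)
    (hΩc : IsCompact (closure Ω)) (hd : 0 ≤ d) (hc : c ≤ 0) (hk : 0 ≤ k)
    (hg : ∀ N, 0 ≤ N → g N ≤ k * N) (hφ : ContDiff ℝ 2 φ) (hφpos : ∀ x ∈ closure Ω, 0 < φ x)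
    (heig : ∀ x, reactionDiffusionOp d a (fun u => c * u) φ x = β * φ x) :
    ∃ C, ∀ m, ∀ x ∈ closure Ω, sol.N m x ≤ C * (k * exp β) ^ m * φ x := by
  obtain ⟨C, hC0, hC⟩ :=
    hΩc.exists_le_mul_of_pos (sol.N_cont 0) hφ.continuous.continuousOn hφpos
  refine ⟨C, fun m => ?_⟩
  induction m with
  | zero => simpa using hC
  | succ m ih =>
    set A := k * (C * (k * exp β) ^ m) with hA
    have hcmp := comparison_principle hΩo hΩc hd a (antitone_mul_left hc)
      (sol.parabolicRegular m) (ParabolicRegular.of_exp_mul hφ Ω A β)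
      (fun x hx t ht => (sol.pde m x hx t ht).le)
      (fun x _ t _ => (deriv_exp_mul_eq_reactionDiffusionOp hφ heig A x t).ge)
      (fun x hx => by
        rw [sol.init m x hx, mul_zero, exp_zero, mul_one, hA, mul_assoc]
        exact (hg _ (sol.N_nonneg m x (subset_closure hx))).trans
          (mul_le_mul_of_nonneg_left (ih x (subset_closure hx)) hk))
      (fun x hx t ht => by
        rw [sol.bdry m x hx t ht]
        have := hφpos x (frontier_subset_closure hx)
        positivity)
    intro x hx
    rw [sol.recur m x hx]
    calc sol.u m x 1 ≤ A * exp (β * 1) * φ x := hcmp x hx 1 ⟨zero_le_one, le_rfl⟩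
      _ = C * (k * exp β) ^ (m + 1) * φ x := by rw [hA, mul_one]; ring

theorem tendsto_N_zero (sol : ImpSol n Ω d a (fun u => c * u) g) (hΩo : IsOpen Ω)
    (hΩc : IsCompact (closure Ω)) (hd : 0 ≤ d) (hc : c ≤ 0) (hk : 0 ≤ k)
    (hg : ∀ N, 0 ≤ N → g N ≤ k * N) (hφ : ContDiff ℝ 2 φ) (hφpos : ∀ x ∈ closure Ω, 0 < φ x)
    (heig : ∀ x, reactionDiffusionOp d a (fun u => c * u) φ x = β * φ x)
    (hr : k * exp β < 1) : ∀ x ∈ closure Ω, Tendsto (fun m => sol.N m x) atTop (𝓝 0) := by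
  obtain ⟨C, hC⟩ := sol.N_le_geometric hΩo hΩc hd hc hk hg hφ hφpos heig
  intro x hx
  have hlim : Tendsto (fun m => C * (k * exp β) ^ m * φ x) atTop (𝓝 0) := by
    simpa using ((tendsto_pow_atTop_nhds_zero_of_lt_one (by positivity) hr).const_mul C).mul_const
      (φ x)
  exact squeeze_zero (fun m => sol.N_nonneg m x hx) (fun m => hC m x hx) hlim

end ImpSol

section Cube

variable {n : ℕ} {L : ℝ}

lemma isOpen_cube : IsOpen {x : EuclideanSpace ℝ (Fin n) | ∀ i, x i ∈ Set.Ioo 0 L} := by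
  simp only [Set.ofPred_forall]
  exact isOpen_iInter_of_finite fun i =>
    isOpen_Ioo.preimage (EuclideanSpace.proj (𝕜 := ℝ) i).continuous

lemma isCompact_closedCube :
    IsCompact {x : EuclideanSpace ℝ (Fin n) | ∀ i, x i ∈ Set.Icc 0 L} := by
  have h := (EuclideanSpace.equiv (Fin n) ℝ).toHomeomorph.isCompact_preimage.2
    (isCompact_univ_pi fun _ => isCompact_Icc (a := 0) (b := L))
  convert h using 1
  ext x
  simp only [Set.mem_ofPred_eq, Set.mem_preimage, Set.mem_univ_pi]
  rfl

lemma closure_cube_subset : closure {x : EuclideanSpace ℝ (Fin n) | ∀ i, x i ∈ Set.Ioo 0 L}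
    ⊆ {x | ∀ i, x i ∈ Set.Icc 0 L} :=
  closure_minimal (fun _ hx i => Set.Ioo_subset_Icc_self (hx i)) isCompact_closedCube.isClosed

lemma isCompact_closure_cube :
    IsCompact (closure {x : EuclideanSpace ℝ (Fin n) | ∀ i, x i ∈ Set.Ioo 0 L}) :=
  isCompact_closedCube.of_isClosed_subset isClosed_closure closure_cube_subset

end Cube

lemma bevertonHolt_le {μ N : ℝ} (hμ : 0 ≤ μ) (hN : 0 ≤ N) :
    (1 + μ) * N / (1 + μ * N) ≤ (1 + μ) * N :=
  div_le_self (by positivity) (by nlinarith)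

lemma reactionDiffusionOp_prod_expSinProfile {n : ℕ} {d : ℝ} (hd : d ≠ 0)
    (a : EuclideanSpace ℝ (Fin n)) (q s c : ℝ) (x : EuclideanSpace ℝ (Fin n)) :
    reactionDiffusionOp d (fun _ => a) (fun u => c * u)
        (fun y => ∏ j, expSinProfile (a j / (2 * d)) q s (y j)) x
      = (c - (‖a‖ ^ 2 / (4 * d) + n * d * q ^ 2))
        * ∏ j, expSinProfile (a j / (2 * d)) q s (x j) := by
  have hν : ∀ j z, d * deriv (deriv (expSinProfile (a j / (2 * d)) q s)) z
      - a j * deriv (expSinProfile (a j / (2 * d)) q s) z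
      = -(d * ((a j / (2 * d)) ^ 2 + q ^ 2)) * expSinProfile (a j / (2 * d)) q s z := by
    intro j z
    convert expSinProfile_ode (a j / (2 * d)) q s d z using 3
    field_simp
  have hsum : ∑ j, d * ((a j / (2 * d)) ^ 2 + q ^ 2) = ‖a‖ ^ 2 / (4 * d) + n * d * q ^ 2 := by
    simp only [EuclideanSpace.real_norm_sq_eq, mul_add, Finset.sum_add_distrib,
      Finset.sum_const, Finset.card_univ, Fintype.card_fin, nsmul_eq_mul, Finset.sum_div]
    congr 1
    · exact Finset.sum_congr rfl fun j _ => by field_simp; ring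
    · ring
  rw [reactionDiffusionOp_prod (fun j => differentiable_expSinProfile _ _ _)
    (fun j => differentiable_deriv_expSinProfile _ _ _) hν c x, hsum]

theorem ImpSol.tendsto_N_zero_of_cube {n : ℕ} {d γ μ L ℓ : ℝ} (hd : 0 < d) (hγ : 0 ≤ γ)
    (hμ : 0 ≤ μ) (a : EuclideanSpace ℝ (Fin n)) (hLℓ : L < ℓ) (hℓ : 0 < ℓ)
    (hcrit : log (1 + μ) - γ - ‖a‖ ^ 2 / (4 * d) < n * d * (π / ℓ) ^ 2)
    (sol : ImpSol n {x | ∀ i, x i ∈ Set.Ioo 0 L} d (fun _ => a) (fun u => -γ * u)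
      (fun N => (1 + μ) * N / (1 + μ * N))) :
    ∀ x ∈ closure {x : EuclideanSpace ℝ (Fin n) | ∀ i, x i ∈ Set.Ioo 0 L},
      Tendsto (fun m => sol.N m x) atTop (𝓝 0) := by
  set q := π / ℓ
  set s := (ℓ - L) / 2 with hs
  set ψ : Fin n → ℝ → ℝ := fun j => expSinProfile (a j / (2 * d)) q s
  have hφ : ContDiff ℝ 2 fun y : EuclideanSpace ℝ (Fin n) => ∏ j, ψ j (y j) :=
    contDiff_prod fun j _ =>
      (contDiff_expSinProfile _ q s).comp (EuclideanSpace.proj (𝕜 := ℝ) j).contDiff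
  have hφpos : ∀ x ∈ closure {x : EuclideanSpace ℝ (Fin n) | ∀ i, x i ∈ Set.Ioo 0 L},
      0 < ∏ j, ψ j (x j) := fun x hx => Finset.prod_pos fun j _ => by
    obtain ⟨h0, hL⟩ := closure_cube_subset hx j
    have hq : 0 < q := div_pos pi_pos hℓ
    refine expSinProfile_pos _ q s (by positivity) ?_
    calc q * (x j + s) < q * ℓ := by gcongr; linarith [hs]
      _ = π := div_mul_cancel₀ π hℓ.ne'
  refine sol.tendsto_N_zero isOpen_cube isCompact_closure_cube hd.le (by linarith)
    (by positivity) (fun N hN => bevertonHolt_le hμ hN) hφ hφpos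
    (reactionDiffusionOp_prod_expSinProfile hd.ne' a q s (-γ)) ?_
  rw [← exp_log (by positivity : (0 : ℝ) < 1 + μ), ← exp_add, exp_lt_one_iff]
  linarith

lemma lt_mul_div_sq_of_lt_div_sqrt {σ c ℓ : ℝ} (hσ : 0 < σ) (hc : 0 ≤ c) (hℓ : 0 < ℓ)
    (h : ℓ < π * √c / √σ) : σ < c * (π / ℓ) ^ 2 := by
  have h₁ : ℓ * √σ < π * √c := (lt_div_iff₀ (sqrt_pos.2 hσ)).1 h
  have h₂ : (ℓ * √σ) ^ 2 < (π * √c) ^ 2 := pow_lt_pow_left₀ h₁ (by positivity) two_ne_zero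
  rw [mul_pow, mul_pow, sq_sqrt hσ.le, sq_sqrt hc] at h₂
  rw [div_pow, ← mul_div_assoc, lt_div_iff₀ (by positivity)]
  linarith

theorem marine_reserve_extinction_general
    (d γ μ : ℝ) (hd : 0 < d) (hγ : 0 < γ) (hμ : 0 < μ)
    (a : EuclideanSpace ℝ (Fin 2))
    (hcond : γ + ‖a‖ ^ 2 / (4 * d) < Real.log (1 + μ))
    (Lstar : ℝ)
    (hLstar : Lstar = Real.pi * Real.sqrt (2 * d) /
      Real.sqrt (Real.log (1 + μ) - γ - ‖a‖ ^ 2 / (4 * d)))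
    (L : ℝ) (hLlt : L < Lstar)
    (Ω : Set (EuclideanSpace ℝ (Fin 2)))
    (hΩ : Ω = {x | ∀ i, x i ∈ Set.Ioo 0 L})
    (sol : ImpSol 2 Ω d (fun _ => a) (fun u => -γ * u)
      (fun N => (1 + μ) * N / (1 + μ * N))) :
    ∀ x ∈ Ω, Tendsto (fun m => sol.N m x) atTop (𝓝 0) := by
  subst hΩ
  have hσ : 0 < log (1 + μ) - γ - ‖a‖ ^ 2 / (4 * d) := by linarith
  have hLstar_pos : 0 < Lstar := hLstar ▸ by positivity
  obtain ⟨ℓ, hLℓ, hℓLstar⟩ := exists_between (max_lt hLlt hLstar_pos)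
  have hℓ : 0 < ℓ := (le_max_right L 0).trans_lt hLℓ
  have hcrit := lt_mul_div_sq_of_lt_div_sqrt hσ (by positivity) hℓ (hLstar ▸ hℓLstar)
  refine fun x hx => sol.tendsto_N_zero_of_cube hd hγ.le hμ.le a
    ((le_max_left L 0).trans_lt hLℓ) hℓ ?_ x (subset_closure hx)
  push_cast
  linarith

/-- The marine-reserve (Beverton-Holt) model: extinction on a square habitat of
subcritical side length. -/
theorem marine_reserve_extinction
    (d γ μ : ℝ) (hd : 0 < d) (hγ : 0 < γ) (hμ : 0 < μ)
    (a : EuclideanSpace ℝ (Fin 2))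
    (hcond : γ + ‖a‖ ^ 2 / (4 * d) < Real.log (1 + μ))
    (Lstar : ℝ)
    (hLstar : Lstar = Real.pi * Real.sqrt (2 * d) /
      Real.sqrt (Real.log (1 + μ) - γ - ‖a‖ ^ 2 / (4 * d)))
    (L : ℝ) (hL0 : 0 < L) (hLlt : L < Lstar)
    (Ω : Set (EuclideanSpace ℝ (Fin 2)))
    (hΩ : Ω = {x | ∀ i, x i ∈ Set.Ioo 0 L})
    (sol : ImpSol 2 Ω d (fun _ => a) (fun u => -γ * u)
      (fun N => (1 + μ) * N / (1 + μ * N))) :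
    ∀ x ∈ Ω, Tendsto (fun m => sol.N m x) atTop (𝓝 0) :=
  marine_reserve_extinction_general d γ μ hd hγ hμ a hcond Lstar hLstar L hLlt Ω hΩ sol
end
end

section
/- Let d > 0, r > 0, L₁ > 0, L₂ > 0, and s ∈ (0,1) with s > s* := 1 − e^{dπ²·(L₁² + L₂²)/(L₁²·L₂²) − r}. Let Ω = (0,L₁) × (0,L₂) ⊂ ℝ² and take zero drift a = 0. Then every solution of the impulsive reaction–diffusion system on Ω with f(u) = r·(1 − u)·u and g(N) = (1 − s)·N satisfies lim_{m→∞} N_m(x) = 0 for every x ∈ Ω. -/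
open Real Filter MeasureTheory
open scoped Topology ENNReal

noncomputable section

/-!
The proof compares each season with a separable supersolution. For `θ < 1` the mode
`P x = cos (θπ/L₁ · (x₀ - L₁/2)) · cos (θπ/L₂ · (x₁ - L₂/2))` is positive on the closed
rectangle and satisfies `ΔP = -κ P` with `κ = θ²π² (1/L₁² + 1/L₂²)`. As `f u ≤ r u` for `u ≥ 0`,
the function `C e^{(r - dκ)t} P` is a supersolution which dominates `u⁽ᵐ⁾` on the parabolic
boundary, so by the maximum principle `u⁽ᵐ⁾(·, 1) ≤ C e^{r - dκ} P`. Iterating,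
`N_m ≤ B ((1 - s) e^{r - dκ})^m P`, and `s > s*` is exactly what allows `θ` so close to `1` that
this ratio is below `1`.
-/

lemma deriv_nonneg_of_isMaxOn_Icc {g : ℝ → ℝ} {a b : ℝ} (hab : a < b)
    (hg : DifferentiableAt ℝ g b) (hmax : IsMaxOn g (Set.Icc a b) b) : 0 ≤ deriv g b := by
  have hcone : a - b ∈ posTangentConeAt (Set.Icc a b) b :=
    sub_mem_posTangentConeAt_of_segment_subset
      ((segment_symm ℝ b a).trans (segment_eq_Icc hab.le)).subset
  have := (hmax.localize : IsLocalMaxOn g _ b).hasFDerivWithinAt_nonpos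
    hg.hasDerivAt.hasDerivWithinAt.hasFDerivWithinAt hcone
  rw [ContinuousLinearMap.toSpanSingleton_apply, smul_eq_mul] at this
  exact nonneg_of_mul_nonpos_right this (sub_neg.2 hab)

lemma IsLocalMax.deriv_deriv_nonpos_s19 {g : ℝ → ℝ} {a : ℝ} (hmax : IsLocalMax g a)
    (hg : ContinuousAt g a) : deriv (deriv g) a ≤ 0 := by
  by_contra! hpos
  have hconst : g =ᶠ[𝓝 a] fun _ => g a :=
    (Filter.Eventually.and (isLocalMin_of_deriv_deriv_pos hpos hmax.deriv_eq_zero hg) hmax).mono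
      fun _ h => le_antisymm h.2 h.1
  have : deriv g =ᶠ[𝓝 a] fun _ => 0 :=
    hconst.eventuallyEq_nhds.mono fun _ h => h.deriv_eq.trans (deriv_const _ _)
  rw [this.deriv_eq, deriv_const] at hpos
  exact lt_irrefl _ hpos

section SecondDerivative

variable {E : Type*} [NormedAddCommGroup E] [NormedSpace ℝ E]

lemma hasDerivAt_line (x e : E) (s : ℝ) : HasDerivAt (fun s : ℝ => x + s • e) e s := by
  simpa using ((hasDerivAt_id s).smul_const e).const_add x

lemma tendsto_line (x e : E) : Tendsto (fun s : ℝ => x + s • e) (𝓝 0) (𝓝 x) := by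
  simpa using (hasDerivAt_line x e 0).continuousAt.tendsto

lemma ContDiffAt.differentiableAt_fderiv_apply {F : E → ℝ} {x : E} (hF : ContDiffAt ℝ 2 F x)
    (e : E) : DifferentiableAt ℝ (fun y => fderiv ℝ F y e) x :=
  ((hF.fderiv_right (by norm_num)).clm_apply contDiffAt_const).differentiableAt one_ne_zero

lemma deriv_deriv_comp_line {F : E → ℝ} {x : E} (hF : ContDiffAt ℝ 2 F x) (e : E) :
    deriv (deriv fun s : ℝ => F (x + s • e)) 0 = fderiv ℝ (fun y => fderiv ℝ F y e) x e := by
  have hfirst : (deriv fun s : ℝ => F (x + s • e)) =ᶠ[𝓝 0] fun s => fderiv ℝ F (x + s • e) e :=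
    ((tendsto_line x e).eventually (hF.eventually (by norm_num))).mono fun s hs =>
      ((hs.differentiableAt two_ne_zero).hasFDerivAt.comp_hasDerivAt s
        (hasDerivAt_line x e s)).deriv
  rw [hfirst.deriv_eq]
  exact ((hF.differentiableAt_fderiv_apply e).hasFDerivAt.comp_hasDerivAt_of_eq (0 : ℝ)
    (hasDerivAt_line x e 0) (by simp)).deriv

lemma IsLocalMax.fderiv_fderiv_apply_self_nonpos {F : E → ℝ} {x : E} (hmax : IsLocalMax F x)
    (hF : ContDiffAt ℝ 2 F x) (e : E) : fderiv ℝ (fun y => fderiv ℝ F y e) x e ≤ 0 := by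
  rw [← deriv_deriv_comp_line hF e]
  refine IsLocalMax.deriv_deriv_nonpos_s19 ?_
    (hF.continuousAt.comp_of_eq (hasDerivAt_line x e 0).continuousAt (by simp))
  simpa [IsLocalMax, IsMaxFilter] using (tendsto_line x e).eventually hmax

end SecondDerivative

section Laplacian

variable {n : ℕ} {F u P : EuclideanSpace ℝ (Fin n) → ℝ} {x : EuclideanSpace ℝ (Fin n)}

lemma IsLocalMax.lap_nonpos_s19 (hmax : IsLocalMax F x) (hF : ContDiffAt ℝ 2 F x) : lap F x ≤ 0 :=
  Finset.sum_nonpos fun _ _ => hmax.fderiv_fderiv_apply_self_nonpos hF _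

lemma pd_sub_const_mul (hu : DifferentiableAt ℝ u x) (hP : DifferentiableAt ℝ P x) (c : ℝ)
    (i : Fin n) : pd (fun y => u y - c * P y) i x = pd u i x - c * pd P i x := by
  simp [pd, fderiv_fun_sub hu (hP.const_mul c), fderiv_const_mul hP]

lemma lap_sub_const_mul (hu : ContDiffAt ℝ 2 u x) (hP : ContDiffAt ℝ 2 P x) (c : ℝ) :
    lap (fun y => u y - c * P y) x = lap u x - c * lap P x := by
  simp only [lap, pd2, Finset.mul_sum, ← Finset.sum_sub_distrib]
  refine Finset.sum_congr rfl fun i _ => ?_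
  have hpd : (fun y => pd (fun z => u z - c * P z) i y) =ᶠ[𝓝 x]
      fun y => pd u i y - c * pd P i y :=
    (hu.eventually (by norm_num)).and (hP.eventually (by norm_num)) |>.mono fun y hy =>
      pd_sub_const_mul (hy.1.differentiableAt two_ne_zero) (hy.2.differentiableAt two_ne_zero) c i
  rw [pd, hpd.fderiv_eq]
  exact pd_sub_const_mul (hu.differentiableAt_fderiv_apply _)
    (hP.differentiableAt_fderiv_apply _) c i

end Laplacian

section Separable

variable {f g : ℝ → ℝ} {y : EuclideanSpace ℝ (Fin 2)}

lemma hasFDerivAt_mul_sep {a b : ℝ} (hf : HasDerivAt f a (y 0)) (hg : HasDerivAt g b (y 1)) :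
    HasFDerivAt (fun z : EuclideanSpace ℝ (Fin 2) => f (z 0) * g (z 1))
      ((g (y 1) * a) • EuclideanSpace.proj (𝕜 := ℝ) (0 : Fin 2) +
        (f (y 0) * b) • EuclideanSpace.proj (𝕜 := ℝ) (1 : Fin 2)) y := by
  have h := (hf.comp_hasFDerivAt y (EuclideanSpace.proj (𝕜 := ℝ) (0 : Fin 2)).hasFDerivAt).mul
    (hg.comp_hasFDerivAt y (EuclideanSpace.proj (𝕜 := ℝ) (1 : Fin 2)).hasFDerivAt)
  refine h.congr_fderiv ?_
  ext z
  simp only [add_apply, smul_apply, smul_eq_mul, Function.comp_apply, EuclideanSpace.coe_proj]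
  ring

lemma pd_mul_sep {a b : ℝ} (hf : HasDerivAt f a (y 0)) (hg : HasDerivAt g b (y 1)) :
    pd (fun z => f (z 0) * g (z 1)) 0 y = a * g (y 1) ∧
      pd (fun z => f (z 0) * g (z 1)) 1 y = f (y 0) * b := by
  simp only [pd, (hasFDerivAt_mul_sep hf hg).fderiv]
  constructor <;> simp [mul_comm]

lemma lap_mul_sep {f' f'' g' g'' : ℝ → ℝ} (hf : ∀ t, HasDerivAt f (f' t) t)
    (hf' : ∀ t, HasDerivAt f' (f'' t) t) (hg : ∀ t, HasDerivAt g (g' t) t)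
    (hg' : ∀ t, HasDerivAt g' (g'' t) t) (y : EuclideanSpace ℝ (Fin 2)) :
    lap (fun z => f (z 0) * g (z 1)) y = f'' (y 0) * g (y 1) + f (y 0) * g'' (y 1) := by
  have hpd0 : (fun z => pd (fun z => f (z 0) * g (z 1)) 0 z) = fun z => f' (z 0) * g (z 1) :=
    funext fun z => (pd_mul_sep (hf (z 0)) (hg (z 1))).1
  have hpd1 : (fun z => pd (fun z => f (z 0) * g (z 1)) 1 z) = fun z => f (z 0) * g' (z 1) :=
    funext fun z => (pd_mul_sep (hf (z 0)) (hg (z 1))).2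
  rw [lap, Fin.sum_univ_two, pd2, pd2, hpd0, hpd1, (pd_mul_sep (hf' _) (hg _)).1,
    (pd_mul_sep (hf _) (hg' _)).2]

end Separable

lemma hasDerivAt_cos_mul_sub (α c t : ℝ) :
    HasDerivAt (fun t => cos (α * (t - c))) (-α * sin (α * (t - c))) t :=
  (((hasDerivAt_id' t).sub_const c).const_mul α).cos.congr_deriv (by ring)

lemma hasDerivAt_neg_mul_sin_mul_sub (α c t : ℝ) :
    HasDerivAt (fun t => -α * sin (α * (t - c))) (-α ^ 2 * cos (α * (t - c))) t :=
  (((hasDerivAt_id' t).sub_const c).const_mul α).sin.const_mul (-α) |>.congr_deriv (by ring)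

def rectMode (α β L₁ L₂ : ℝ) (z : EuclideanSpace ℝ (Fin 2)) : ℝ :=
  cos (α * (z 0 - L₁ / 2)) * cos (β * (z 1 - L₂ / 2))

lemma lap_rectMode (α β L₁ L₂ : ℝ) (y : EuclideanSpace ℝ (Fin 2)) :
    lap (rectMode α β L₁ L₂) y = -(α ^ 2 + β ^ 2) * rectMode α β L₁ L₂ y := by
  unfold rectMode
  rw [lap_mul_sep (hasDerivAt_cos_mul_sub α _) (hasDerivAt_neg_mul_sin_mul_sub α _)
    (hasDerivAt_cos_mul_sub β _) (hasDerivAt_neg_mul_sin_mul_sub β _)]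
  ring

lemma cos_mul_sub_half_pos {α L t : ℝ} (hα : 0 ≤ α) (hαL : α * L < π) (ht : t ∈ Set.Icc 0 L) :
    0 < cos (α * (t - L / 2)) :=
  cos_pos_of_mem_Ioo
    ⟨by nlinarith [mul_nonneg hα ht.1], by nlinarith [mul_nonneg hα (sub_nonneg.2 ht.2)]⟩

lemma rectMode_pos {α β L₁ L₂ : ℝ} (hα : 0 ≤ α) (hαL : α * L₁ < π) (hβ : 0 ≤ β)
    (hβL : β * L₂ < π) {z : EuclideanSpace ℝ (Fin 2)}
    (hz : z 0 ∈ Set.Icc 0 L₁ ∧ z 1 ∈ Set.Icc 0 L₂) :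
    0 < rectMode α β L₁ L₂ z :=
  mul_pos (cos_mul_sub_half_pos hα hαL hz.1) (cos_mul_sub_half_pos hβ hβL hz.2)

lemma contDiff_rectMode (α β L₁ L₂ : ℝ) {k : WithTop ℕ∞} : ContDiff ℝ k (rectMode α β L₁ L₂) := by
  unfold rectMode
  fun_prop

section Rectangle

variable {L₁ L₂ : ℝ}

lemma isOpen_rect :
    IsOpen {x : EuclideanSpace ℝ (Fin 2) | x 0 ∈ Set.Ioo 0 L₁ ∧ x 1 ∈ Set.Ioo 0 L₂} :=
  (isOpen_Ioo.preimage (EuclideanSpace.proj (𝕜 := ℝ) 0).continuous).inter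
    (isOpen_Ioo.preimage (EuclideanSpace.proj (𝕜 := ℝ) 1).continuous)

lemma isCompact_closedRect :
    IsCompact {x : EuclideanSpace ℝ (Fin 2) | x 0 ∈ Set.Icc 0 L₁ ∧ x 1 ∈ Set.Icc 0 L₂} := by
  convert (EuclideanSpace.equiv (Fin 2) ℝ).toHomeomorph.isCompact_preimage.2
    (isCompact_Icc (a := 0) (b := ![L₁, L₂])) using 1
  ext x
  simp [Pi.le_def, Fin.forall_fin_two, and_and_and_comm]

lemma closure_rect_subset :
    closure {x : EuclideanSpace ℝ (Fin 2) | x 0 ∈ Set.Ioo 0 L₁ ∧ x 1 ∈ Set.Ioo 0 L₂} ⊆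
      {x | x 0 ∈ Set.Icc 0 L₁ ∧ x 1 ∈ Set.Icc 0 L₂} :=
  closure_minimal (fun _ hx => ⟨Set.Ioo_subset_Icc_self hx.1, Set.Ioo_subset_Icc_self hx.2⟩)
    isCompact_closedRect.isClosed

end Rectangle

namespace ImpSol

variable {n : ℕ} {Ω : Set (EuclideanSpace ℝ (Fin n))} {d : ℝ}
  {a : EuclideanSpace ℝ (Fin n) → EuclideanSpace ℝ (Fin n)} {f g : ℝ → ℝ}
  {r κ C : ℝ} {P : EuclideanSpace ℝ (Fin n) → ℝ}

/-- The factor `e^{-(r+1)t}` makes a positive maximum at `t > 0` incompatible with the equation. -/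
def weightedExcess (sol : ImpSol n Ω d a f g) (m : ℕ) (r κ C : ℝ)
    (P : EuclideanSpace ℝ (Fin n) → ℝ) (p : EuclideanSpace ℝ (Fin n) × ℝ) : ℝ :=
  exp (-(r + 1) * p.2) * (sol.u m p.1 p.2 - C * exp ((r - d * κ) * p.2) * P p.1)

lemma weightedExcess_nonpos_iff (sol : ImpSol n Ω d a f g) (m : ℕ) (x) (t : ℝ) :
    sol.weightedExcess m r κ C P (x, t) ≤ 0 ↔ sol.u m x t ≤ C * exp ((r - d * κ) * t) * P x := by
  rw [weightedExcess, ← mul_zero (exp _), mul_le_mul_iff_of_pos_left (exp_pos _), sub_nonpos]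

lemma continuousOn_weightedExcess (sol : ImpSol n Ω d a f g) (m : ℕ) (hP : Continuous P) :
    ContinuousOn (sol.weightedExcess m r κ C P) (closure Ω ×ˢ Set.Icc 0 1) :=
  (by fun_prop : Continuous fun p : EuclideanSpace ℝ (Fin n) × ℝ => exp (-(r + 1) * p.2))
    |>.continuousOn.mul ((sol.u_cont m).sub (by fun_prop : Continuous
      fun p : EuclideanSpace ℝ (Fin n) × ℝ => C * exp ((r - d * κ) * p.2) * P p.1).continuousOn)

lemma hasDerivAt_weightedExcess (sol : ImpSol n Ω d (fun _ => 0) f g) {m : ℕ}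
    {x : EuclideanSpace ℝ (Fin n)} {t : ℝ} (hx : x ∈ Ω) (ht : t ∈ Set.Ioc 0 1) :
    HasDerivAt (fun s => sol.weightedExcess m r κ C P (x, s))
      (exp (-(r + 1) * t) * (deriv (sol.u m x) t - (r - d * κ) * (C * exp ((r - d * κ) * t) * P x)
        - (r + 1) * (sol.u m x t - C * exp ((r - d * κ) * t) * P x))) t := by
  have hu := ((sol.u_time_C1 m x hx t ht).differentiableAt one_ne_zero).hasDerivAt
  have hW := (((hasDerivAt_id' t).const_mul (r - d * κ)).exp.const_mul C).mul_const (P x)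
  refine (((hasDerivAt_id' t).const_mul (-(r + 1))).exp.mul (hu.sub hW)).congr_deriv ?_
  simp only [Pi.sub_apply]
  ring

lemma u_le_of_isMaxOn_weightedExcess (sol : ImpSol n Ω d (fun _ => 0) f g) (hΩ : IsOpen Ω)
    (hd : 0 ≤ d) (hf : ∀ u, 0 ≤ u → f u ≤ r * u) (hP : ContDiff ℝ 2 P)
    (hΔP : ∀ x ∈ Ω, lap P x ≤ -κ * P x) (hC : 0 ≤ C) {m : ℕ} {x₀ : EuclideanSpace ℝ (Fin n)}
    {t₀ : ℝ} (hx₀ : x₀ ∈ Ω) (ht₀ : t₀ ∈ Set.Ioc 0 1)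
    (hmax : IsMaxOn (sol.weightedExcess m r κ C P) (closure Ω ×ˢ Set.Icc 0 1) (x₀, t₀)) :
    sol.u m x₀ t₀ ≤ C * exp ((r - d * κ) * t₀) * P x₀ := by
  set c := C * exp ((r - d * κ) * t₀) with hc
  have hc0 : 0 ≤ c := mul_nonneg hC (exp_pos _).le
  have hspace : IsLocalMax (fun y => sol.u m y t₀ - c * P y) x₀ := by
    filter_upwards [hΩ.mem_nhds hx₀] with y hy
    have := hmax (Set.mk_mem_prod (subset_closure hy) (Set.Ioc_subset_Icc_self ht₀))
    exact (mul_le_mul_iff_of_pos_left (exp_pos (-(r + 1) * t₀))).1 this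
  have hlap : lap (fun y => sol.u m y t₀) x₀ ≤ c * lap P x₀ := by
    have hu := sol.u_space_C2 m t₀ ht₀ x₀ hx₀
    have := hspace.lap_nonpos_s19 (hu.sub (contDiffAt_const.mul hP.contDiffAt))
    rw [lap_sub_const_mul hu hP.contDiffAt] at this
    linarith
  have htime := deriv_nonneg_of_isMaxOn_Icc ht₀.1
    (sol.hasDerivAt_weightedExcess hx₀ ht₀).differentiableAt fun t ht =>
      hmax (Set.mk_mem_prod (subset_closure hx₀) ⟨ht.1, ht.2.trans ht₀.2⟩)
  rw [(sol.hasDerivAt_weightedExcess hx₀ ht₀).deriv, ← hc] at htime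
  have htime' := nonneg_of_mul_nonneg_right htime (exp_pos _)
  have hpde := sol.pde m x₀ hx₀ t₀ ht₀
  simp only [WithLp.ofLp_zero, Pi.zero_apply, zero_mul, Finset.sum_const_zero, sub_zero] at hpde
  have hreact := hf _ (sol.u_nonneg m x₀ (subset_closure hx₀) t₀ (Set.Ioc_subset_Icc_self ht₀))
  have hdiff : d * (c * lap P x₀) ≤ d * (c * (-κ * P x₀)) :=
    mul_le_mul_of_nonneg_left (mul_le_mul_of_nonneg_left (hΔP x₀ hx₀) hc0) hd
  linarith [mul_le_mul_of_nonneg_left hlap hd]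

theorem u_le_of_init_le (sol : ImpSol n Ω d (fun _ => 0) f g) (hΩ : IsOpen Ω)
    (hΩc : IsCompact (closure Ω)) (hd : 0 ≤ d) (hf : ∀ u, 0 ≤ u → f u ≤ r * u)
    (hP : ContDiff ℝ 2 P) (hP0 : ∀ x ∈ closure Ω, 0 ≤ P x) (hΔP : ∀ x ∈ Ω, lap P x ≤ -κ * P x)
    (hC : 0 ≤ C) {m : ℕ} (hinit : ∀ x ∈ Ω, sol.u m x 0 ≤ C * P x) :
    ∀ x ∈ closure Ω, ∀ t ∈ Set.Icc (0 : ℝ) 1, sol.u m x t ≤ C * exp ((r - d * κ) * t) * P x := by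
  intro x hx t ht
  obtain ⟨⟨x₀, t₀⟩, ⟨hx₀, ht₀⟩, hmax⟩ := (hΩc.prod isCompact_Icc).exists_isMaxOn
    ⟨(x, t), hx, ht⟩ (sol.continuousOn_weightedExcess m (r := r) (κ := κ) (C := C) hP.continuous)
  suffices sol.weightedExcess m r κ C P (x₀, t₀) ≤ 0 from
    (sol.weightedExcess_nonpos_iff m x t).1 ((hmax ⟨hx, ht⟩).trans this)
  rw [weightedExcess_nonpos_iff]
  rcases ht₀.1.eq_or_lt with rfl | ht₀pos
  · have hinit' : ∀ y ∈ closure Ω, sol.u m y 0 ≤ C * P y :=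
      le_on_closure hinit
        ((sol.u_cont m).comp (continuous_id.prodMk continuous_const).continuousOn
          fun y hy => ⟨hy, Set.left_mem_Icc.2 zero_le_one⟩)
        (continuous_const.mul hP.continuous).continuousOn
    simpa using hinit' x₀ hx₀
  by_cases hx₀Ω : x₀ ∈ Ω
  · exact sol.u_le_of_isMaxOn_weightedExcess hΩ hd hf hP hΔP hC hx₀Ω ⟨ht₀pos, ht₀.2⟩ hmax
  · rw [sol.bdry m x₀ ⟨hx₀, by rwa [hΩ.interior_eq]⟩ t₀ ⟨ht₀pos, ht₀.2⟩]
    exact mul_nonneg (mul_nonneg hC (exp_pos _).le) (hP0 x₀ hx₀)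

theorem N_le_geometric_s19 (sol : ImpSol n Ω d (fun _ => 0) f g) (hΩ : IsOpen Ω)
    (hΩc : IsCompact (closure Ω)) (hd : 0 ≤ d) (hf : ∀ u, 0 ≤ u → f u ≤ r * u) {γ B : ℝ}
    (hγ : 0 ≤ γ) (hg : ∀ N, 0 ≤ N → g N ≤ γ * N)
    (hP : ContDiff ℝ 2 P) (hP0 : ∀ x ∈ closure Ω, 0 ≤ P x) (hΔP : ∀ x ∈ Ω, lap P x ≤ -κ * P x)
    (hB : 0 ≤ B) (hN₀ : ∀ x ∈ closure Ω, sol.N 0 x ≤ B * P x) (m : ℕ) :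
    ∀ x ∈ closure Ω, sol.N m x ≤ B * (γ * exp (r - d * κ)) ^ m * P x := by
  induction m with
  | zero => simpa using hN₀
  | succ m ih =>
    intro x hx
    have hC : 0 ≤ γ * (B * (γ * exp (r - d * κ)) ^ m) := by positivity
    have hinit : ∀ y ∈ Ω, sol.u m y 0 ≤ γ * (B * (γ * exp (r - d * κ)) ^ m) * P y := fun y hy =>
      calc sol.u m y 0 = g (sol.N m y) := sol.init m y hy
        _ ≤ γ * sol.N m y := hg _ (sol.N_nonneg m y (subset_closure hy))
        _ ≤ γ * (B * (γ * exp (r - d * κ)) ^ m * P y) :=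
          mul_le_mul_of_nonneg_left (ih y (subset_closure hy)) hγ
        _ = _ := by ring
    calc sol.N (m + 1) x = sol.u m x 1 := sol.recur m x hx
      _ ≤ _ := sol.u_le_of_init_le hΩ hΩc hd hf hP hP0 hΔP hC hinit x hx 1 ⟨zero_le_one, le_rfl⟩
      _ = B * (γ * exp (r - d * κ)) ^ (m + 1) * P x := by rw [mul_one]; ring

theorem tendsto_N_zero_s19 (sol : ImpSol n Ω d (fun _ => 0) f g) (hΩ : IsOpen Ω)
    (hΩc : IsCompact (closure Ω)) (hd : 0 ≤ d) (hf : ∀ u, 0 ≤ u → f u ≤ r * u) {γ : ℝ}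
    (hγ : 0 ≤ γ) (hg : ∀ N, 0 ≤ N → g N ≤ γ * N)
    (hP : ContDiff ℝ 2 P) (hPpos : ∀ x ∈ closure Ω, 0 < P x) (hΔP : ∀ x ∈ Ω, lap P x ≤ -κ * P x)
    (hρ : γ * exp (r - d * κ) < 1) :
    ∀ x ∈ closure Ω, Tendsto (fun m => sol.N m x) atTop (𝓝 0) := by
  obtain ⟨B, hB⟩ := hΩc.bddAbove_image (f := fun x => sol.N 0 x / P x)
    ((sol.N_cont 0).div hP.continuous.continuousOn fun x hx => (hPpos x hx).ne')
  have hN₀ : ∀ x ∈ closure Ω, sol.N 0 x ≤ max B 0 * P x := fun x hx =>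
    (div_le_iff₀ (hPpos x hx)).1 ((hB ⟨x, hx, rfl⟩).trans (le_max_left _ _))
  intro x hx
  have hdecay : Tendsto (fun m => max B 0 * (γ * exp (r - d * κ)) ^ m * P x) atTop (𝓝 0) := by
    simpa using ((tendsto_pow_atTop_nhds_zero_of_lt_one (by positivity) hρ).const_mul
      (max B 0)).mul_const (P x)
  refine squeeze_zero (fun m => sol.N_nonneg m x hx) (fun m => ?_) hdecay
  exact sol.N_le_geometric_s19 hΩ hΩc hd hf hγ hg hP (fun y hy => (hPpos y hy).le) hΔP
    (le_max_right _ _) hN₀ m x hx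

end ImpSol

theorem insect_pest_extirpation_general
    (d r L₁ L₂ s : ℝ) (hd : 0 < d) (hr : 0 < r)
    (hL₁ : 0 < L₁) (hL₂ : 0 < L₂) (hs1 : s < 1)
    (hss : 1 - Real.exp (d * Real.pi ^ 2 * (L₁ ^ 2 + L₂ ^ 2) / (L₁ ^ 2 * L₂ ^ 2) - r) < s)
    (Ω : Set (EuclideanSpace ℝ (Fin 2)))
    (hΩ : Ω = {x | x 0 ∈ Set.Ioo 0 L₁ ∧ x 1 ∈ Set.Ioo 0 L₂})
    (sol : ImpSol 2 Ω d (fun _ => 0) (fun u => r * (1 - u) * u)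
      (fun N => (1 - s) * N)) :
    ∀ x ∈ Ω, Tendsto (fun m => sol.N m x) atTop (𝓝 0) := by
  intro x hx
  have hcrit : (1 - s) * exp (r - d * ((1 * π / L₁) ^ 2 + (1 * π / L₂) ^ 2)) < 1 := by
    have hD : d * π ^ 2 * (L₁ ^ 2 + L₂ ^ 2) / (L₁ ^ 2 * L₂ ^ 2) =
        d * ((1 * π / L₁) ^ 2 + (1 * π / L₂) ^ 2) := by
      field_simp
      ring
    rw [← lt_div_iff₀ (exp_pos _), one_div, ← exp_neg, neg_sub, ← hD]
    linarith
  have hcont : Continuous fun θ =>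
      (1 - s) * exp (r - d * ((θ * π / L₁) ^ 2 + (θ * π / L₂) ^ 2)) := by
    fun_prop
  obtain ⟨θ, ⟨hθ0, hθ1⟩, hθ⟩ := (Filter.Eventually.and (Ioo_mem_nhdsLT zero_lt_one)
    (((hcont.tendsto 1).mono_left nhdsWithin_le_nhds).eventually (gt_mem_nhds hcrit))).exists
  have hθL : ∀ L, 0 < L → θ * π / L * L < π := fun L hL => by
    rw [div_mul_cancel₀ _ hL.ne']
    exact mul_lt_of_lt_one_left pi_pos hθ1
  have hlogistic : ∀ u, 0 ≤ u → r * (1 - u) * u ≤ r * u := fun u hu => by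
    nlinarith [mul_nonneg hr.le (mul_nonneg hu hu)]
  have hopen : IsOpen Ω := hΩ ▸ isOpen_rect
  have hclosure : closure Ω ⊆ {x | x 0 ∈ Set.Icc 0 L₁ ∧ x 1 ∈ Set.Icc 0 L₂} :=
    hΩ ▸ closure_rect_subset
  refine sol.tendsto_N_zero_s19 hopen
    (isCompact_closedRect.of_isClosed_subset isClosed_closure hclosure) hd.le hlogistic
    (by linarith) (fun _ _ => le_rfl) (contDiff_rectMode _ _ L₁ L₂)
    (fun y hy => rectMode_pos (by positivity) (hθL L₁ hL₁) (by positivity) (hθL L₂ hL₂)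
      (hclosure hy))
    (fun y _ => (lap_rectMode _ _ L₁ L₂ y).le) hθ x (subset_closure hx)

/-- The insect-pest model: extirpation on a rectangular habitat when the removal
fraction `s` exceeds the critical value `s*`. -/
theorem insect_pest_extirpation
    (d r L₁ L₂ s : ℝ) (hd : 0 < d) (hr : 0 < r)
    (hL₁ : 0 < L₁) (hL₂ : 0 < L₂) (hs0 : 0 < s) (hs1 : s < 1)
    (hss : 1 - Real.exp (d * Real.pi ^ 2 * (L₁ ^ 2 + L₂ ^ 2) / (L₁ ^ 2 * L₂ ^ 2) - r) < s)
    (Ω : Set (EuclideanSpace ℝ (Fin 2)))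
    (hΩ : Ω = {x | x 0 ∈ Set.Ioo 0 L₁ ∧ x 1 ∈ Set.Ioo 0 L₂})
    (sol : ImpSol 2 Ω d (fun _ => 0) (fun u => r * (1 - u) * u)
      (fun N => (1 - s) * N)) :
    ∀ x ∈ Ω, Tendsto (fun m => sol.N m x) atTop (𝓝 0) :=
  insect_pest_extirpation_general d r L₁ L₂ s hd hr hL₁ hL₂ hs1 hss Ω hΩ sol
end
end
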